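/- For every real z > 0, the function B_t(z) = z·K₁(z)² / (2K₀(z)K₁(z) + z·(K₀(z)² − K₁(z)²)) satisfies B_t(z)/z > K₀(z)/K₁(z). -/

import Mathlib

/-!
Write `w t = exp (-z cosh t)` and `u t = (1 + cosh t) / 2`, so `K₀ = ∫ w` and `(K₀ + K₁)/2 = ∫ w u`
over `(0, ∞)`. Since `w · sinh / u` vanishes at both ends, integrating its derivative gives
`∫ w / u = 2z (K₁ - K₀)`. As `u ≥ 1`, this is at most `K₀`, which makes the denominator of `B_t`
positive; Cauchy–Schwarz `(∫ w)² ≤ ∫ w u · ∫ w / u` gives `K₀² ≤ z (K₁² - K₀²)`. The claim is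
`K₁³ > K₀ (2 K₀ K₁ - z (K₁² - K₀²))`, and by the last bound the difference is at least
`(K₁ - K₀)(K₁² + K₀ K₁ - K₀²) > 0`.
-/

open Real

/-- Modified Bessel function of the second kind of order `j`:
`K_j(z) = ∫₀^∞ exp (−z cosh t) * cosh (j t) dt`. -/
noncomputable def besselK (j : ℕ) (z : ℝ) : ℝ :=
  ∫ t in Set.Ioi (0 : ℝ), Real.exp (-z * Real.cosh t) * Real.cosh ((j : ℝ) * t)

open MeasureTheory Set Filter Topology

theorem sq_integral_le_integral_mul_mul_integral_div {α : Type*} [MeasurableSpace α]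
    {μ : Measure α} {w u : α → ℝ} (hw : ∀ᵐ x ∂μ, 0 ≤ w x) (hu : ∀ x, 0 < u x)
    (hw_int : Integrable w μ) (hwu : Integrable (fun x => w x * u x) μ)
    (hwu' : Integrable (fun x => w x / u x) μ) :
    (∫ x, w x ∂μ) ^ 2 ≤ (∫ x, w x * u x ∂μ) * ∫ x, w x / u x ∂μ := by
  -- discriminant of `l ↦ ∫ w (l u + 1)² / u ≥ 0`
  have hquad : ∀ l : ℝ,
      0 ≤ (∫ x, w x * u x ∂μ) * (l * l) + 2 * (∫ x, w x ∂μ) * l + ∫ x, w x / u x ∂μ := by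
    intro l
    have hexpand : ∀ x, w x * (l * u x + 1) ^ 2 / u x
        = l * l * (w x * u x) + 2 * l * w x + w x / u x := by
      intro x
      field_simp [(hu x).ne']
      ring
    calc 0 ≤ ∫ x, w x * (l * u x + 1) ^ 2 / u x ∂μ :=
          integral_nonneg_of_ae <| hw.mono fun x hx =>
            div_nonneg (mul_nonneg hx (sq_nonneg _)) (hu x).le
      _ = _ := by
        simp_rw [hexpand]
        rw [integral_add ((hwu.const_mul _).fun_add (hw_int.const_mul _)) hwu',
          integral_add (hwu.const_mul _) (hw_int.const_mul _), integral_const_mul,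
          integral_const_mul]
        ring
  have hdisc := discrim_le_zero hquad
  rw [discrim] at hdisc
  nlinarith

theorem setIntegral_Ioi_pos {f : ℝ → ℝ} {a : ℝ} (hf : IntegrableOn f (Ioi a))
    (hpos : ∀ t, 0 < f t) : 0 < ∫ t in Ioi a, f t := by
  rw [setIntegral_pos_iff_support_of_nonneg_ae (ae_of_all _ fun t => (hpos t).le) hf,
    Function.support_eq_univ fun t => (hpos t).ne', univ_inter, volume_Ioi]
  exact ENNReal.zero_lt_top

theorem Real.tendsto_sinh_atTop : Tendsto sinh atTop atTop :=
  tendsto_atTop_mono' atTop ((eventually_ge_atTop 0).mono fun _ hx => self_le_sinh_iff.2 hx)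
    tendsto_id

theorem Real.tendsto_cosh_atTop : Tendsto cosh atTop atTop :=
  tendsto_atTop_mono (fun x => (sinh_lt_cosh x).le) tendsto_sinh_atTop

theorem Real.abs_sinh_le_cosh (x : ℝ) : |sinh x| ≤ cosh x := by
  rw [abs_le]
  constructor
  · linarith [sinh_lt_cosh (-x), sinh_neg x, cosh_neg x]
  · exact (sinh_lt_cosh x).le

-- `sinh t / ((1 + cosh t) / 2) = 2 tanh (t / 2)` has derivative `2 / (1 + cosh t)`, and
-- `sinh t ^ 2 / ((1 + cosh t) / 2) = 2 (cosh t - 1)`.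
theorem hasDerivAt_exp_neg_mul_cosh_mul_sinh_div (z x : ℝ) :
    HasDerivAt (fun t => exp (-z * cosh t) * (sinh t / ((1 + cosh t) / 2)))
      (exp (-z * cosh x) / ((1 + cosh x) / 2)
        - 2 * z * (exp (-z * cosh x) * cosh x - exp (-z * cosh x))) x := by
  have hu : (1 + cosh x) / 2 ≠ 0 := by positivity
  have hquot := (hasDerivAt_sinh x).fun_div (((hasDerivAt_cosh x).const_add 1).div_const 2) hu
  refine (((hasDerivAt_cosh x).const_mul (-z)).exp.mul hquot).congr_deriv ?_
  field_simp
  linear_combination (-(z * (1 + cosh x)) - 1) * sinh_sq x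

theorem besselK_zero (z : ℝ) : besselK 0 z = ∫ t in Ioi 0, exp (-z * cosh t) := by
  simp [besselK]

theorem besselK_one (z : ℝ) : besselK 1 z = ∫ t in Ioi 0, exp (-z * cosh t) * cosh t := by
  simp [besselK]

section

variable {z : ℝ} (hz : 0 < z)
include hz

-- An integrable majorant of `exp (-z * cosh t) * cosh t` with the explicit primitive
-- `exp (-z * sinh t) / -z`.
theorem integrableOn_exp_neg_mul_sinh_mul_cosh :
    IntegrableOn (fun t => exp (-z * sinh t) * cosh t) (Ioi 0) := by
  have hderiv : ∀ x ∈ Ici (0 : ℝ),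
      HasDerivAt (fun t => exp (-z * sinh t) / -z) (exp (-z * sinh x) * cosh x) x := by
    intro x _
    refine (((hasDerivAt_sinh x).const_mul (-z)).exp.div_const (-z)).congr_deriv ?_
    field_simp
  have hlim : Tendsto (fun t => exp (-z * sinh t) / -z) atTop (𝓝 (0 / -z)) :=
    (tendsto_exp_atBot.comp
      (tendsto_sinh_atTop.const_mul_atTop_of_neg (neg_neg_of_pos hz))).div_const _
  exact integrableOn_Ioi_deriv_of_nonneg' hderiv (fun x _ => by positivity) hlim

theorem integrableOn_exp_neg_mul_cosh_mul_cosh :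
    IntegrableOn (fun t => exp (-z * cosh t) * cosh t) (Ioi 0) := by
  refine (integrableOn_exp_neg_mul_sinh_mul_cosh hz).mono'
    (by fun_prop : Continuous _).aestronglyMeasurable (ae_of_all _ fun t => ?_)
  rw [norm_of_nonneg (by positivity)]
  exact mul_le_mul_of_nonneg_right (exp_le_exp.2 (by nlinarith [sinh_lt_cosh t]))
    (cosh_pos t).le

theorem integrableOn_exp_neg_mul_cosh :
    IntegrableOn (fun t => exp (-z * cosh t)) (Ioi 0) := by
  refine (integrableOn_exp_neg_mul_cosh_mul_cosh hz).mono'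
    (by fun_prop : Continuous _).aestronglyMeasurable (ae_of_all _ fun t => ?_)
  rw [norm_of_nonneg (exp_pos _).le]
  exact le_mul_of_one_le_right (exp_pos _).le (one_le_cosh t)

theorem integrableOn_exp_neg_mul_cosh_div :
    IntegrableOn (fun t => exp (-z * cosh t) / ((1 + cosh t) / 2)) (Ioi 0) := by
  have hcont : Continuous fun t => exp (-z * cosh t) / ((1 + cosh t) / 2) :=
    (by fun_prop : Continuous _).div (by fun_prop) fun t => by positivity
  refine (integrableOn_exp_neg_mul_cosh hz).mono' hcont.aestronglyMeasurable
    (ae_of_all _ fun t => ?_)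
  rw [norm_of_nonneg (by positivity)]
  exact div_le_self (exp_pos _).le (by linarith [one_le_cosh t])

theorem integrableOn_exp_neg_mul_cosh_mul_one_add_cosh_div :
    IntegrableOn (fun t => exp (-z * cosh t) * ((1 + cosh t) / 2)) (Ioi 0) := by
  refine (integrableOn_exp_neg_mul_cosh_mul_cosh hz).mono'
    (by fun_prop : Continuous _).aestronglyMeasurable (ae_of_all _ fun t => ?_)
  rw [norm_of_nonneg (by positivity)]
  gcongr
  linarith [one_le_cosh t]

theorem tendsto_exp_neg_mul_cosh_mul_sinh_div :
    Tendsto (fun t => exp (-z * cosh t) * (sinh t / ((1 + cosh t) / 2))) atTop (𝓝 0) := by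
  have hexp : Tendsto (fun t => 2 * exp (-z * cosh t)) atTop (𝓝 0) := by
    simpa using (tendsto_exp_atBot.comp (tendsto_cosh_atTop.const_mul_atTop_of_neg
      (neg_neg_of_pos hz))).const_mul 2
  refine squeeze_zero_norm (fun t => ?_) hexp
  rw [norm_mul, norm_of_nonneg (exp_pos _).le, mul_comm, norm_div, Real.norm_eq_abs,
    norm_of_nonneg (by positivity : (0 : ℝ) ≤ (1 + cosh t) / 2)]
  gcongr
  rw [div_le_iff₀ (by positivity)]
  linarith [abs_sinh_le_cosh t]

theorem integral_exp_neg_mul_cosh_div :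
    ∫ t in Ioi 0, exp (-z * cosh t) / ((1 + cosh t) / 2)
      = 2 * z * (besselK 1 z - besselK 0 z) := by
  have hdiff := ((integrableOn_exp_neg_mul_cosh_mul_cosh hz).fun_sub
    (integrableOn_exp_neg_mul_cosh hz)).const_mul (2 * z)
  have hftc := integral_Ioi_of_hasDerivAt_of_tendsto'
    (fun x _ => hasDerivAt_exp_neg_mul_cosh_mul_sinh_div z x)
    ((integrableOn_exp_neg_mul_cosh_div hz).fun_sub hdiff)
    (tendsto_exp_neg_mul_cosh_mul_sinh_div hz)
  rw [integral_sub (integrableOn_exp_neg_mul_cosh_div hz) hdiff, integral_const_mul,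
    integral_sub (integrableOn_exp_neg_mul_cosh_mul_cosh hz)
      (integrableOn_exp_neg_mul_cosh hz)] at hftc
  rw [besselK_zero, besselK_one]
  simpa [sub_eq_zero] using hftc

theorem besselK_zero_pos : 0 < besselK 0 z :=
  besselK_zero z ▸ setIntegral_Ioi_pos (integrableOn_exp_neg_mul_cosh hz) fun _ => exp_pos _

theorem besselK_zero_lt_besselK_one : besselK 0 z < besselK 1 z := by
  have hpos := setIntegral_Ioi_pos (integrableOn_exp_neg_mul_cosh_div hz)
    fun t => by positivity
  rw [integral_exp_neg_mul_cosh_div hz] at hpos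
  nlinarith

theorem two_mul_mul_sub_besselK_le_besselK_zero :
    2 * z * (besselK 1 z - besselK 0 z) ≤ besselK 0 z := by
  rw [← integral_exp_neg_mul_cosh_div hz, besselK_zero]
  refine setIntegral_mono_on (integrableOn_exp_neg_mul_cosh_div hz)
    (integrableOn_exp_neg_mul_cosh hz) measurableSet_Ioi fun t _ => ?_
  exact div_le_self (exp_pos _).le (by linarith [one_le_cosh t])

theorem besselK_zero_sq_le :
    besselK 0 z ^ 2 ≤ z * (besselK 1 z ^ 2 - besselK 0 z ^ 2) := by
  have hcs := sq_integral_le_integral_mul_mul_integral_div (μ := volume.restrict (Ioi 0))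
    (ae_of_all _ fun t => (exp_pos (-z * cosh t)).le)
    (fun t => by positivity : ∀ t, 0 < (1 + cosh t) / 2)
    (integrableOn_exp_neg_mul_cosh hz) (integrableOn_exp_neg_mul_cosh_mul_one_add_cosh_div hz)
    (integrableOn_exp_neg_mul_cosh_div hz)
  have hmean : ∫ t in Ioi 0, exp (-z * cosh t) * ((1 + cosh t) / 2)
      = (besselK 0 z + besselK 1 z) / 2 := by
    simp_rw [mul_div_assoc', mul_add, mul_one]
    rw [integral_div, integral_add (integrableOn_exp_neg_mul_cosh hz)
      (integrableOn_exp_neg_mul_cosh_mul_cosh hz), besselK_zero, besselK_one]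
  rw [hmean, integral_exp_neg_mul_cosh_div hz, ← besselK_zero] at hcs
  linarith

end

theorem Bt_ratio_lower_bound (z : ℝ) (hz : 0 < z) :
    (z * (besselK 1 z) ^ 2 /
        (2 * besselK 0 z * besselK 1 z + z * ((besselK 0 z) ^ 2 - (besselK 1 z) ^ 2))) / z >
      besselK 0 z / besselK 1 z := by
  set a := besselK 0 z
  set b := besselK 1 z
  have ha : 0 < a := besselK_zero_pos hz
  have hab : a < b := besselK_zero_lt_besselK_one hz
  have hsub : 2 * z * (b - a) ≤ a := two_mul_mul_sub_besselK_le_besselK_zero hz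
  have hsq : a ^ 2 ≤ z * (b ^ 2 - a ^ 2) := besselK_zero_sq_le hz
  have hden : 0 < 2 * a * b + z * (a ^ 2 - b ^ 2) := by
    nlinarith [mul_le_mul_of_nonneg_right hsub (by linarith : 0 ≤ a + b)]
  rw [gt_iff_lt, mul_div_assoc, mul_div_cancel_left₀ _ hz.ne',
    div_lt_div_iff₀ (ha.trans hab) hden]
  have hfactor : 0 < b ^ 2 + a * b - a ^ 2 := by nlinarith
  nlinarith [mul_le_mul_of_nonneg_left hsq ha.le, mul_pos (sub_pos.2 hab) hfactor]
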